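/- Let k₁, k₂ ∈ ℝ and θ₂, θ₃ > 0. Let D = diag(1, θ₂, θ₃), A = D·K·D⁻¹ and M = Aᵀ·A. Then for every λ ∈ ℝ, det(λ·I₃ − M) = λ·(λ² − β·λ + γ), where β = 4k₁² + θ₂² + θ₂⁻² + θ₃² + k₂²·θ₃⁻² and γ = 1 + θ₂⁻²·θ₃² + k₂² + k₂²·θ₂²·θ₃⁻². -/

import Mathlib

/-!
For a `3 × 3` matrix, `det (λ • 1 - M) = λ³ - tr M · λ² + c₂(M) · λ - det M`, where `c₂` is the sum
of the principal `2 × 2` minors. Here `det M = (det A)² = (det K)² = 0` because `K` has two equal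
rows, which produces the factor `λ`; the remaining coefficients `tr M = β` and `c₂(M) = γ` are read
off from the entries `A i j = dᵢ Kᵢⱼ / dⱼ` of the diagonal conjugate.
-/

/-- The boundary coupling matrix `K`. -/
def Kmat (k₁ k₂ : ℝ) : Matrix (Fin 3) (Fin 3) ℝ :=
  !![-2 * k₁, 1, -k₂; 1, 0, 0; 1, 0, 0]

namespace Matrix

def principalMinorSum {R : Type*} [CommRing R] (M : Matrix (Fin 3) (Fin 3) R) : R :=
  (M 0 0 * M 1 1 - M 0 1 * M 1 0) + (M 0 0 * M 2 2 - M 0 2 * M 2 0) +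
    (M 1 1 * M 2 2 - M 1 2 * M 2 1)

theorem det_smul_one_sub_fin_three {R : Type*} [CommRing R] (M : Matrix (Fin 3) (Fin 3) R)
    (t : R) :
    (t • (1 : Matrix (Fin 3) (Fin 3) R) - M).det =
      t ^ 3 - M.trace * t ^ 2 + M.principalMinorSum * t - M.det := by
  simp only [det_fin_three, trace_fin_three, principalMinorSum, sub_apply, smul_apply,
    one_apply_eq, one_apply_ne, ne_eq, Fin.reduceEq, not_false_eq_true, smul_eq_mul, mul_one,
    mul_zero]
  ring

theorem diagonal_mul_mul_inv_diagonal {n K : Type*} [Fintype n] [DecidableEq n] [Field K]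
    (d : n → K) (hd : ∀ i, d i ≠ 0) (N : Matrix n n K) :
    diagonal d * N * (diagonal d)⁻¹ = of fun i j => d i * N i j / d j := by
  have : (diagonal d)⁻¹ = diagonal d⁻¹ :=
    inv_eq_right_inv (by rw [diagonal_mul_diagonal]; simp [mul_inv_cancel₀ (hd _)])
  ext i j
  simp [this, div_eq_mul_inv]

end Matrix

open Matrix

theorem det_Kmat (k₁ k₂ : ℝ) : (Kmat k₁ k₂).det = 0 :=
  det_zero_of_row_eq (i := 1) (j := 2) (by decide) (by ext j; fin_cases j <;> rfl)

theorem stmt_7 (k₁ k₂ θ₂ θ₃ : ℝ) (hθ₂ : 0 < θ₂) (hθ₃ : 0 < θ₃)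
    (D : Matrix (Fin 3) (Fin 3) ℝ) (hD : D = Matrix.diagonal ![1, θ₂, θ₃])
    (A : Matrix (Fin 3) (Fin 3) ℝ) (hA : A = D * Kmat k₁ k₂ * D⁻¹)
    (M : Matrix (Fin 3) (Fin 3) ℝ) (hM : M = A.transpose * A)
    (β γ : ℝ)
    (hβ : β = 4 * k₁ ^ 2 + (θ₂ ^ 2 + (θ₂ ^ 2)⁻¹) + (θ₃ ^ 2 + k₂ ^ 2 * (θ₃ ^ 2)⁻¹))
    (hγ : γ = 1 + (θ₂ ^ 2)⁻¹ * θ₃ ^ 2 + k₂ ^ 2 + k₂ ^ 2 * θ₂ ^ 2 * (θ₃ ^ 2)⁻¹) :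
    ∀ lam : ℝ, (lam • (1 : Matrix (Fin 3) (Fin 3) ℝ) - M).det =
      lam * (lam ^ 2 - β * lam + γ) := by
  intro lam
  have hdet : M.det = 0 := by
    rw [hM, det_mul, det_transpose, hA, det_mul, det_mul, det_Kmat]
    ring
  have hA' : A = of fun i j => ![1, θ₂, θ₃] i * Kmat k₁ k₂ i j / ![1, θ₂, θ₃] j := by
    rw [hA, hD]
    refine diagonal_mul_mul_inv_diagonal _ (fun i => ?_) _
    fin_cases i <;> simp [hθ₂.ne', hθ₃.ne']
  have htrace : M.trace = β := by
    simp only [hM, hA', hβ, Kmat, trace_fin_three, mul_apply, transpose_apply, of_apply,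
      Fin.sum_univ_three, cons_val', cons_val_zero, cons_val_one, cons_val, cons_val_fin_one]
    field_simp
    ring
  have hminors : M.principalMinorSum = γ := by
    simp only [hM, hA', hγ, Kmat, principalMinorSum, mul_apply, transpose_apply, of_apply,
      Fin.sum_univ_three, cons_val', cons_val_zero, cons_val_one, cons_val, cons_val_fin_one]
    field_simp
    ring
  rw [det_smul_one_sub_fin_three, htrace, hminors, hdet]
  ring
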